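/- arXiv:1805.04646 — 2 statements merged into one kernel-verified Lean document; each statement's English description precedes it below -/
import Mathlib

section
/- Let 0 < ε < arctan(1/2) and set z = tan(ε). Then the complex number G(z) = −(1+z)(1+3z)/((1+i·z)(1−2z)) has argument exactly π − ε, i.e., Complex.arg(G(tan ε)) = π − ε. (Note that for 0 < ε < arctan(1/2) one has 0 < tan ε < 1/2, so the denominator is nonzero.) -/
/-!
Writing `t = tan ε`, the factor `1 / (1 + i t) = cos ε · e^{-iε}` carries the whole argument:
`G(t) = -(1+t)(1+3t) / ((1-2t)(1+it))` is a positive real multiple of `-e^{-iε} = e^{i(π-ε)}`,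
and `π - ε` already lies in `(-π, π]`.
-/

open Complex Real

lemma Real.tan_lt_of_lt_arctan {θ x : ℝ} (hθ : -(π / 2) < θ) (h : θ < arctan x) : tan θ < x := by
  have hθ' : θ < π / 2 := h.trans (arctan_lt_pi_div_two x)
  rwa [← arctan_tan hθ hθ', arctan_lt_arctan_iff] at h

lemma Complex.one_add_I_mul_tan {θ : ℝ} (hθ : Real.cos θ ≠ 0) :
    1 + I * (Real.tan θ : ℂ) = (Real.cos θ : ℂ)⁻¹ * (Real.cos θ + Real.sin θ * I) := by
  have hθ' : (Real.cos θ : ℂ) ≠ 0 := by exact_mod_cast hθ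
  rw [Real.tan_eq_sin_div_cos, ofReal_div]
  field_simp

lemma Complex.arg_neg_ofReal_div_one_add_I_mul_tan {r θ : ℝ} (hr : 0 < r) (hθ₀ : 0 ≤ θ)
    (hθ : θ < π / 2) : arg (-((r : ℂ) / (1 + I * (Real.tan θ : ℂ)))) = π - θ := by
  have hcos : 0 < Real.cos θ := cos_pos_of_mem_Ioo ⟨by linarith [pi_pos], hθ⟩
  have hunit : (Real.cos θ + Real.sin θ * I : ℂ) * (Real.cos θ - Real.sin θ * I) = 1 := by
    have hpyth : (Real.sin θ : ℂ) ^ 2 + (Real.cos θ : ℂ) ^ 2 = 1 := by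
      exact_mod_cast sin_sq_add_cos_sq θ
    linear_combination hpyth - (Real.sin θ : ℂ) ^ 2 * I_sq
  have hrot : -((r : ℂ) / (1 + I * (Real.tan θ : ℂ))) =
      ((r * Real.cos θ : ℝ) : ℂ) * (Real.cos (π - θ) + Real.sin (π - θ) * I) := by
    rw [one_add_I_mul_tan hcos.ne', Real.cos_pi_sub, Real.sin_pi_sub, div_mul_eq_div_div,
      div_inv_eq_mul, div_eq_mul_inv, inv_eq_of_mul_eq_one_right hunit]
    push_cast
    ring
  rw [hrot, ofReal_cos, ofReal_sin]
  exact arg_mul_cos_add_sin_mul_I (mul_pos hr hcos) ⟨by linarith [pi_pos], by linarith⟩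

/-- For `0 < ε < arctan(1/2)` and `z = tan ε`, the complex number
`G(z) = −(1+z)(1+3z)/((1+i·z)(1−2z))` has argument exactly `π − ε`. -/
theorem arg_G_tan_eq (ε : ℝ) (h1 : 0 < ε) (h2 : ε < Real.arctan (1/2)) :
    Complex.arg (-(((1 + (Real.tan ε : ℂ)) * (1 + 3 * (Real.tan ε : ℂ))) /
      ((1 + Complex.I * (Real.tan ε : ℂ)) * (1 - 2 * (Real.tan ε : ℂ))))) = Real.pi - ε := by
  set t := Real.tan ε
  have ht₀ : 0 < t := tan_pos_of_pos_of_lt_pi_div_two h1 (h2.trans (arctan_lt_pi_div_two _))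
  have ht : t < 1 / 2 := tan_lt_of_lt_arctan (by linarith [pi_pos]) h2
  have hG : ((1 + (t : ℂ)) * (1 + 3 * (t : ℂ))) / ((1 + I * (t : ℂ)) * (1 - 2 * (t : ℂ))) =
      (((1 + t) * (1 + 3 * t) / (1 - 2 * t) : ℝ) : ℂ) / (1 + I * (t : ℂ)) := by
    push_cast
    rw [div_div, mul_comm (1 - 2 * (t : ℂ))]
  rw [hG]
  exact arg_neg_ofReal_div_one_add_I_mul_tan (by apply div_pos <;> nlinarith) h1.le
    (h2.trans (arctan_lt_pi_div_two _))
end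

section
/- Let 0 < ε < π/2 and set z = tan(ε). Then the complex number H(z) = (i·z − 1)/(3 + z) has argument exactly π − ε, i.e., Complex.arg((i·tan(ε) − 1)/(3 + tan(ε))) = π − ε. -/
/-! Dividing `i·tan ε − 1` by the positive real `3 + tan ε` does not change its argument, and
`i·tan ε − 1 = (cos ε)⁻¹ · (−cos ε + i·sin ε) = (cos ε)⁻¹ · (cos (π − ε) + i·sin (π − ε))`
with `(cos ε)⁻¹ > 0`. -/

open Complex

lemma Complex.I_mul_tan_sub_one {ε : ℝ} (hε : Real.cos ε ≠ 0) :
    I * (Real.tan ε : ℂ) - 1 =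
      ((Real.cos ε)⁻¹ : ℝ) * (cos ↑(Real.pi - ε) + sin ↑(Real.pi - ε) * I) := by
  have hε' : cos (ε : ℂ) ≠ 0 := by exact_mod_cast hε
  push_cast
  rw [cos_pi_sub, sin_pi_sub, tan_eq_sin_div_cos]
  field_simp
  ring

lemma Complex.arg_I_mul_tan_sub_one {ε : ℝ} (h0 : 0 ≤ ε) (h : ε < Real.pi / 2) :
    arg (I * (Real.tan ε : ℂ) - 1) = Real.pi - ε := by
  have hcos : 0 < Real.cos ε := Real.cos_pos_of_mem_Ioo ⟨by linarith [Real.pi_pos], h⟩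
  rw [I_mul_tan_sub_one hcos.ne', arg_real_mul _ (inv_pos.2 hcos)]
  exact arg_cos_add_sin_mul_I ⟨by linarith [Real.pi_pos], by linarith⟩

lemma Complex.arg_div_ofReal {r : ℝ} (hr : 0 < r) (x : ℂ) : arg (x / r) = arg x := by
  rw [div_eq_mul_inv, ← ofReal_inv, arg_mul_real (inv_pos.2 hr)]

/-- For `0 < ε < π/2` and `z = tan ε`, the complex number
`H(z) = (i·z − 1)/(3 + z)` has argument exactly `π − ε`. -/
theorem arg_H_tan_eq (ε : ℝ) (h1 : 0 < ε) (h2 : ε < Real.pi / 2) :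
    Complex.arg ((Complex.I * (Real.tan ε : ℂ) - 1) / (3 + (Real.tan ε : ℂ))) = Real.pi - ε := by
  have hden : 0 < 3 + Real.tan ε := by
    linarith [Real.tan_pos_of_pos_of_lt_pi_div_two h1 h2]
  have hcast : (3 + Real.tan ε : ℝ) = (3 + (Real.tan ε : ℂ)) := by push_cast; rfl
  rw [← hcast, arg_div_ofReal hden, arg_I_mul_tan_sub_one h1.le h2]
end
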